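/- Fix x ∈ (0,1), n ≥ 3, α > 0, and let T ~ Gamma(n, α), b = ln(2x-x²) < 0, A = (n-1)(2-2x)/(2x-x²). Then E[A(T+b)^{n-2}/T^{n-1} · 1{T > -b}] = α(2-2x)(2x-x²)^{α-1}, i.e., the estimator f̃(x) = (n-1)(2-2x)(T + ln(2x-x²))^{n-2}/((2x-x²) T^{n-1}) (taken as 0 when T ≤ -b) is unbiased for the Topp-Leone density f(x). -/

import Mathlib

/-!
On `t > -log c`, with `c = 2x - x²`, the Gamma density cancels `t ^ (n-1)` and leaves the kernel
`(t + log c) ^ (n-2) e^{-αt}`. The shift `s = t + log c` turns it into a Gamma integral equal to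
`e^{α log c} (n-2)! / α ^ (n-1) = c ^ α (n-2)! / α ^ (n-1)`, and the constants collapse to
`α (2 - 2x) c ^ (α - 1)`.
-/

open MeasureTheory Set

theorem setIntegral_Ioi_comp_add_right {E : Type*} [NormedAddCommGroup E] [NormedSpace ℝ E]
    (f : ℝ → E) (a b : ℝ) : ∫ t in Ioi (a - b), f (t + b) = ∫ s in Ioi a, f s := by
  have hpre : (· + b) ⁻¹' Ioi a = Ioi (a - b) := by
    ext t; simp [sub_lt_iff_lt_add]
  rw [← hpre]
  exact (measurePreserving_add_right volume b).setIntegral_preimage_emb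
    (measurableEmbedding_addRight b) f (Ioi a)

theorem integral_Ioi_pow_mul_exp_neg_mul (k : ℕ) {r : ℝ} (hr : 0 < r) :
    ∫ s in Ioi (0 : ℝ), s ^ k * Real.exp (-(r * s)) = k.factorial / r ^ (k + 1) := by
  have h := Real.integral_rpow_mul_exp_neg_mul_Ioi (a := k + 1) (by positivity) hr
  simp only [add_sub_cancel_right, Real.rpow_natCast] at h
  rw [h, ← Real.Gamma_nat_eq_factorial, ← Nat.cast_succ, Real.rpow_natCast, one_div_pow,
    one_div_mul_eq_div]

theorem integral_Ioi_neg_add_pow_mul_exp_neg_mul (k : ℕ) (b : ℝ) {r : ℝ} (hr : 0 < r) :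
    ∫ t in Ioi (-b), (t + b) ^ k * Real.exp (-(r * t))
      = Real.exp (r * b) * (k.factorial / r ^ (k + 1)) := by
  calc ∫ t in Ioi (-b), (t + b) ^ k * Real.exp (-(r * t))
      = ∫ t in Ioi (0 - b), Real.exp (r * b) * ((t + b) ^ k * Real.exp (-(r * (t + b)))) := by
        rw [zero_sub]
        congr 1 with t
        rw [mul_left_comm, ← Real.exp_add]
        ring_nf
    _ = Real.exp (r * b) * (k.factorial / r ^ (k + 1)) := by
        rw [integral_const_mul, setIntegral_Ioi_comp_add_right
          (fun s => s ^ k * Real.exp (-(r * s))), integral_Ioi_pow_mul_exp_neg_mul k hr]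

theorem umvue_pdf_unbiased (n : ℕ) (hn : 3 ≤ n) (α x : ℝ) (hα : 0 < α)
    (hx : x ∈ Ioo (0:ℝ) 1) :
    (∫ t in Ioi (-(Real.log (2*x - x^2))),
        (((n:ℝ) - 1) * (2 - 2*x) / (2*x - x^2))
            * (t + Real.log (2*x - x^2)) ^ (n-2) / t ^ (n-1)
          * (α^n * t^(n-1) * Real.exp (-α * t) / Real.Gamma n))
      = α * (2 - 2*x) * (2*x - x^2) ^ (α - 1) := by
  obtain ⟨m, rfl⟩ : ∃ m, n = m + 2 := ⟨n - 2, by omega⟩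
  obtain ⟨hx0, hx1⟩ := hx
  set c := 2*x - x^2
  have hc0 : 0 < c := by nlinarith
  have hb : Real.log c < 0 := Real.log_neg hc0 (by nlinarith)
  have hΓ : Real.Gamma ((m + 2 : ℕ) : ℝ) = (m + 1).factorial := by
    rw [← Real.Gamma_nat_eq_factorial]; push_cast; ring_nf
  have hpow : c ^ α = Real.exp (α * Real.log c) := by
    rw [Real.rpow_def_of_pos hc0, mul_comm]
  set K := ((m + 2 : ℕ) - 1 : ℝ) * (2 - 2*x) / c * (α ^ (m + 2) / Real.Gamma ((m + 2 : ℕ) : ℝ))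
  have hintegrand : ∀ t ∈ Ioi (-Real.log c),
      ((m + 2 : ℕ) - 1 : ℝ) * (2 - 2*x) / c * (t + Real.log c) ^ (m + 2 - 2) / t ^ (m + 2 - 1)
          * (α ^ (m + 2) * t ^ (m + 2 - 1) * Real.exp (-α * t) / Real.Gamma ((m + 2 : ℕ) : ℝ))
        = K * ((t + Real.log c) ^ m * Real.exp (-(α * t))) := by
    intro t ht
    have ht0 : t ≠ 0 := (lt_trans (neg_pos.2 hb) ht).ne'
    simp only [K, Nat.add_sub_cancel, neg_mul]
    field_simp
  rw [setIntegral_congr_fun measurableSet_Ioi hintegrand, integral_const_mul,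
    integral_Ioi_neg_add_pow_mul_exp_neg_mul m _ hα, Real.rpow_sub_one hc0.ne', hpow]
  simp only [K, hΓ, Nat.factorial_succ]
  push_cast
  field_simp
  ring
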